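/- Let T be a low-defect tree, and define its complexity ‖T‖ as the least ‖E‖ over all low-defect expressions E with T(E) isomorphic to T. Then ‖T‖ = Σ_{e an edge of T} ‖w(e)‖ + Σ_{v a leaf of T} ‖w(v)‖ + Σ_{v a non-leaf vertex of T with w(v) > 1} ‖w(v)‖, where w denotes the label of the given vertex or edge. -/

import Mathlib

/-- `CpxW n k` : the positive integer `n` can be written using exactly `k` ones,
with an arbitrary combination of additions and multiplications. -/
inductive CpxW : ℕ → ℕ → Prop
  | one : CpxW 1 1
  | add {a b m n : ℕ} : CpxW a m → CpxW b n → CpxW (a + b) (m + n)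
  | mul {a b m n : ℕ} : CpxW a m → CpxW b n → CpxW (a * b) (m + n)

/-- The integer complexity `‖n‖`. -/
noncomputable def cpx (n : ℕ) : ℕ := sInf {k | CpxW n k}

/-- Low-defect expressions: built from positive integer constants (rule `const`,
positivity recorded in `LDE.WF`), products (rule `mul`, disjointness of the
variables recorded in `LDE.WF`) and `E·x + c` (rule `step`, freshness of `x`
recorded in `LDE.WF`).  Variables are indexed by natural numbers. -/
inductive LDE : Type
  | const (n : ℕ) : LDE
  | mul (E₁ E₂ : LDE) : LDE
  | step (E : LDE) (x : ℕ) (c : ℕ) : LDE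

/-- The set of variables used by a low-defect expression. -/
def LDE.vars : LDE → Finset ℕ
  | .const _ => ∅
  | .mul E₁ E₂ => E₁.vars ∪ E₂.vars
  | .step E x _ => insert x E.vars

/-- Well-formedness of a low-defect expression: constants are positive, the two
factors of a product use disjoint sets of variables, and the variable of
`E·x + c` does not occur in `E`. -/
def LDE.WF : LDE → Prop
  | .const n => 0 < n
  | .mul E₁ E₂ => E₁.WF ∧ E₂.WF ∧ Disjoint E₁.vars E₂.vars
  | .step E x c => E.WF ∧ x ∉ E.vars ∧ 0 < c

/-- The polynomial obtained by evaluating a low-defect expression. -/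
noncomputable def LDE.poly : LDE → MvPolynomial ℕ ℤ
  | .const n => MvPolynomial.C (n : ℤ)
  | .mul E₁ E₂ => E₁.poly * E₂.poly
  | .step E x c => E.poly * MvPolynomial.X x + MvPolynomial.C (c : ℤ)

/-- The complexity `‖E‖` of a low-defect expression. -/
noncomputable def LDE.cpx : LDE → ℕ
  | .const n => _root_.cpx n
  | .mul E₁ E₂ => E₁.cpx + E₂.cpx
  | .step E _ c => E.cpx + _root_.cpx c

/-- Low-defect trees: rooted trees whose vertices and edges are labeled by
natural numbers (positivity of the labels is recorded in `LDT.Pos`); a node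
carries its label together with the list of its subtrees, each with the label of
the corresponding edge. -/
inductive LDT : Type
  | node (label : ℕ) (children : List (ℕ × LDT)) : LDT

/-- The label of the root. -/
def LDT.label : LDT → ℕ | .node n _ => n

/-- The children (edge label, subtree) of the root. -/
def LDT.children : LDT → List (ℕ × LDT) | .node _ cs => cs

mutual
/-- All labels of a low-defect tree are positive. -/
def LDT.Pos : LDT → Prop
  | .node n cs => 0 < n ∧ LDT.PosAux cs

def LDT.PosAux : List (ℕ × LDT) → Prop
  | [] => True
  | c :: cs => 0 < c.1 ∧ c.2.Pos ∧ LDT.PosAux cs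
end

/-- Isomorphism of labeled rooted trees: a root-preserving, label-preserving
graph isomorphism; concretely, the root labels agree and the children lists
match up to a permutation, recursively. -/
inductive LDT.Iso : LDT → LDT → Prop
  | node (n : ℕ) (cs₁ cs₂ : List (ℕ × LDT)) (σ : Fin cs₁.length ≃ Fin cs₂.length)
      (hlab : ∀ i : Fin cs₁.length, (cs₁.get i).1 = (cs₂.get (σ i)).1)
      (hiso : ∀ i : Fin cs₁.length, LDT.Iso (cs₁.get i).2 (cs₂.get (σ i)).2) :
      LDT.Iso (.node n cs₁) (.node n cs₂)

/-- The low-defect tree `T(E)` associated to a low-defect expression `E`. -/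
def LDE.tree : LDE → LDT
  | .const n => .node n []
  | .step E _ c => .node 1 [(c, E.tree)]
  | .mul E₁ E₂ => .node (E₁.tree.label * E₂.tree.label) (E₁.tree.children ++ E₂.tree.children)

/-- The subtree of a low-defect tree at a position (a path from the root, given
by the list of child indices); `none` if there is no such vertex. -/
def LDT.sub? : LDT → List ℕ → Option LDT
  | t, [] => some t
  | t, i :: p =>
    match t.children[i]? with
    | some c => LDT.sub? c.2 p
    | none => none

/-- `p` is a vertex of `t` (vertices are encoded by their positions). -/
def LDT.IsVert (t : LDT) (p : List ℕ) : Prop := (t.sub? p).isSome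

/-- The label of the vertex at position `p` (junk value `1` if `p` is not a
vertex). -/
def LDT.labelAt (t : LDT) (p : List ℕ) : ℕ := ((t.sub? p).map LDT.label).getD 1

/-- The list of children at position `p`. -/
def LDT.childrenAt (t : LDT) (p : List ℕ) : List (ℕ × LDT) :=
  ((t.sub? p).map LDT.children).getD []

/-- The label of the edge joining the non-root vertex at position `q` to its
parent (junk value `1` if there is no such edge). -/
def LDT.edgeLabelAt (t : LDT) (q : List ℕ) : ℕ :=
  (((t.sub? q.dropLast).bind (fun s => s.children[q.getLast?.getD 0]?)).map
    Prod.fst).getD 1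

mutual
/-- The list of all positions (vertices) of a low-defect tree. -/
def LDT.positions : LDT → List (List ℕ)
  | .node _ cs => [] :: LDT.positionsAux 0 cs

def LDT.positionsAux : ℕ → List (ℕ × LDT) → List (List ℕ)
  | _, [] => []
  | i, c :: cs => (c.2.positions.map (i :: ·)) ++ LDT.positionsAux (i + 1) cs
end

/-- The finite set of vertices (positions) of a low-defect tree. -/
def LDT.vertFinset (t : LDT) : Finset (List ℕ) := t.positions.toFinset

/-- The finite set of edges of a low-defect tree, an edge being encoded by the
position of its lower (non-root) endpoint. -/
def LDT.edgeFinset (t : LDT) : Finset (List ℕ) := t.positions.toFinset.erase []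

/-- The variable of `E` corresponding to the non-root vertex of `T(E)` at a given
position, under the canonical bijection between variables of `E` and non-root
vertices of `T(E)`. -/
def LDE.varAt : LDE → List ℕ → Option ℕ
  | .const _, _ => none
  | .step E x _, p =>
    match p with
    | 0 :: p' => if p' = [] then some x else E.varAt p'
    | _ => none
  | .mul E₁ E₂, p =>
    match p with
    | i :: p' =>
      if i < E₁.tree.children.length then E₁.varAt (i :: p')
      else E₂.varAt ((i - E₁.tree.children.length) :: p')
    | [] => none

/-- The position of the non-root vertex of `T(E)` corresponding to a variable of
`E`, under the canonical bijection. -/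
def LDE.posOf : LDE → ℕ → Option (List ℕ)
  | .const _, _ => none
  | .step E v _, x => if x = v then some [0] else (E.posOf x).map (0 :: ·)
  | .mul E₁ E₂, x =>
    match E₁.posOf x with
    | some p => some p
    | none => (E₂.posOf x).map (fun p =>
        match p with
        | i :: p' => (i + E₁.tree.children.length) :: p'
        | [] => [])

/-- The complexity of a low-defect tree: the least complexity of a low-defect
expression whose tree is isomorphic to it. -/
noncomputable def LDT.cpx (t : LDT) : ℕ :=
  sInf {c | ∃ E : LDE, E.WF ∧ LDT.Iso E.tree t ∧ LDE.cpx E = c}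

/-!
The right-hand side is a sum of local contributions and can be computed by recursion on the
tree (`LDT.formulaCpx`); it is invariant under isomorphism. Each rule for building `E` raises
`‖E‖` by at least as much as it raises the formula for `T(E)`: the only nontrivial case is a
product, where merging two roots labelled `a` and `b` costs `‖ab‖ ≤ ‖a‖ + ‖b‖`. Conversely a
tree with positive labels is `T(E)` for an `E` attaining the formula: the root label (omitted
when it is `1`) times the product of the `Eᵢ·xᵢ + cᵢ` over the children, with fresh variables.
-/

theorem exists_cpxW {n : ℕ} (hn : 0 < n) : ∃ k, CpxW n k := by
  induction n with
  | zero => omega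
  | succ m ih =>
    rcases Nat.eq_zero_or_pos m with rfl | hm
    · exact ⟨1, .one⟩
    · obtain ⟨k, hk⟩ := ih hm
      exact ⟨k + 1, .add hk .one⟩

theorem cpxW_cpx {n : ℕ} (hn : 0 < n) : CpxW n (cpx n) :=
  Nat.sInf_mem (exists_cpxW hn)

theorem cpx_mul_le {a b : ℕ} (ha : 0 < a) (hb : 0 < b) : cpx (a * b) ≤ cpx a + cpx b :=
  Nat.sInf_le (.mul (cpxW_cpx ha) (cpxW_cpx hb))

namespace LDT

noncomputable def vertexCpx (n : ℕ) (cs : List (ℕ × LDT)) : ℕ :=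
  if cs = [] ∨ 1 < n then _root_.cpx n else 0

mutual
noncomputable def formulaCpx : LDT → ℕ
  | .node n cs => vertexCpx n cs + formulaCpxList cs

noncomputable def formulaCpxList : List (ℕ × LDT) → ℕ
  | [] => 0
  | c :: cs => _root_.cpx c.1 + c.2.formulaCpx + formulaCpxList cs
end

theorem formulaCpx_eq_vertexCpx_add (t : LDT) :
    t.formulaCpx = vertexCpx t.label t.children + formulaCpxList t.children := by
  obtain ⟨n, cs⟩ := t
  rw [formulaCpx, label, children]

theorem formulaCpxList_eq_sum (cs : List (ℕ × LDT)) :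
    formulaCpxList cs = (cs.map fun c => _root_.cpx c.1 + c.2.formulaCpx).sum := by
  induction cs with
  | nil => rw [formulaCpxList, List.map_nil, List.sum_nil]
  | cons c cs ih => rw [formulaCpxList, List.map_cons, List.sum_cons, ih]

theorem formulaCpxList_append (cs₁ cs₂ : List (ℕ × LDT)) :
    formulaCpxList (cs₁ ++ cs₂) = formulaCpxList cs₁ + formulaCpxList cs₂ := by
  simp only [formulaCpxList_eq_sum, List.map_append, List.sum_append]

/-! ### The formula as a sum over positions -/

theorem positions_node (n : ℕ) (cs : List (ℕ × LDT)) :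
    (node n cs).positions = [] :: positionsAux 0 cs := by
  rw [positions]

theorem positionsAux_cons (i : ℕ) (c : ℕ × LDT) (cs : List (ℕ × LDT)) :
    positionsAux i (c :: cs) = c.2.positions.map (i :: ·) ++ positionsAux (i + 1) cs := by
  rw [positionsAux]

theorem exists_cons_of_mem_positionsAux {p : List ℕ} :
    ∀ {cs : List (ℕ × LDT)} {i : ℕ}, p ∈ positionsAux i cs → ∃ j q, p = j :: q ∧ i ≤ j
  | c :: cs, i, hp => by
    rw [positionsAux_cons, List.mem_append] at hp
    rcases hp with hp | hp
    · obtain ⟨q, -, rfl⟩ := List.mem_map.1 hp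
      exact ⟨i, q, rfl, le_rfl⟩
    · obtain ⟨j, q, rfl, hj⟩ := exists_cons_of_mem_positionsAux hp
      exact ⟨j, q, rfl, by omega⟩

theorem ne_nil_of_mem_positionsAux {p : List ℕ} {cs : List (ℕ × LDT)} {i : ℕ}
    (h : p ∈ positionsAux i cs) : p ≠ [] := by
  obtain ⟨j, q, rfl, -⟩ := exists_cons_of_mem_positionsAux h
  exact List.cons_ne_nil j q

mutual
theorem nodup_positions : ∀ t : LDT, t.positions.Nodup
  | .node n cs => by
    rw [positions_node, List.nodup_cons]
    exact ⟨fun h => ne_nil_of_mem_positionsAux h rfl, nodup_positionsAux 0 cs⟩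

theorem nodup_positionsAux : ∀ (i : ℕ) (cs : List (ℕ × LDT)), (positionsAux i cs).Nodup
  | _, [] => by simp [positionsAux]
  | i, c :: cs => by
    rw [positionsAux_cons, List.nodup_append]
    refine ⟨(nodup_positions c.2).map (List.cons_injective (a := i)),
      nodup_positionsAux (i + 1) cs, ?_⟩
    rintro _ hp p' hp' rfl
    obtain ⟨q, -, rfl⟩ := List.mem_map.1 hp
    obtain ⟨j, q', heq, hj⟩ := exists_cons_of_mem_positionsAux hp'
    have : i = j := (List.cons_eq_cons.1 heq).1
    omega
end

theorem sum_positions_add_ite_nil (t : LDT) (a : ℕ) (f : List ℕ → ℕ) :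
    (t.positions.map fun p => (if p = [] then a else 0) + f p).sum
      = a + (t.positions.map f).sum := by
  obtain ⟨n, cs⟩ := t
  have hf : ∀ p ∈ positionsAux 0 cs, (if p = [] then a else 0) + f p = f p := fun p hp => by
    rw [if_neg (ne_nil_of_mem_positionsAux hp), zero_add]
  rw [positions_node, List.map_cons, List.map_cons, List.sum_cons, List.sum_cons,
    List.map_congr_left hf, if_pos rfl]
  omega

theorem sub?_cons (n : ℕ) {cs : List (ℕ × LDT)} {i : ℕ} {c : ℕ × LDT}
    (h : cs[i]? = some c) (p : List ℕ) : (node n cs).sub? (i :: p) = c.2.sub? p := by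
  simp [sub?, children, h]

theorem labelAt_cons (n : ℕ) {cs : List (ℕ × LDT)} {i : ℕ} {c : ℕ × LDT}
    (h : cs[i]? = some c) (p : List ℕ) : (node n cs).labelAt (i :: p) = c.2.labelAt p := by
  rw [labelAt, labelAt, sub?_cons n h]

theorem childrenAt_cons (n : ℕ) {cs : List (ℕ × LDT)} {i : ℕ} {c : ℕ × LDT}
    (h : cs[i]? = some c) (p : List ℕ) :
    (node n cs).childrenAt (i :: p) = c.2.childrenAt p := by
  rw [childrenAt, childrenAt, sub?_cons n h]

theorem edgeLabelAt_singleton (n : ℕ) {cs : List (ℕ × LDT)} {i : ℕ} {c : ℕ × LDT}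
    (h : cs[i]? = some c) : (node n cs).edgeLabelAt [i] = c.1 := by
  simp [edgeLabelAt, sub?, children, h]

theorem edgeLabelAt_cons (n : ℕ) {cs : List (ℕ × LDT)} {i : ℕ} {c : ℕ × LDT}
    (h : cs[i]? = some c) {p : List ℕ} (hp : p ≠ []) :
    (node n cs).edgeLabelAt (i :: p) = c.2.edgeLabelAt p := by
  obtain ⟨x, p, rfl⟩ := List.exists_cons_of_ne_nil hp
  rw [edgeLabelAt, edgeLabelAt, List.dropLast_cons_cons, sub?_cons n h, List.getLast?_cons_cons]

noncomputable def localCpx (t : LDT) (p : List ℕ) : ℕ :=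
  (if p = [] then 0 else _root_.cpx (t.edgeLabelAt p)) + vertexCpx (t.labelAt p) (t.childrenAt p)

theorem localCpx_cons (n : ℕ) {cs : List (ℕ × LDT)} {i : ℕ} {c : ℕ × LDT}
    (h : cs[i]? = some c) (p : List ℕ) :
    (node n cs).localCpx (i :: p) = (if p = [] then _root_.cpx c.1 else 0) + c.2.localCpx p := by
  rcases eq_or_ne p [] with rfl | hp
  · simp [localCpx, labelAt_cons n h, childrenAt_cons n h, edgeLabelAt_singleton n h]
  · simp [localCpx, labelAt_cons n h, childrenAt_cons n h, edgeLabelAt_cons n h hp, hp]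

mutual
theorem sum_localCpx_positions : ∀ t : LDT, (t.positions.map t.localCpx).sum = t.formulaCpx
  | .node n cs => by
    rw [positions_node, List.map_cons, List.sum_cons, formulaCpx_eq_vertexCpx_add,
      sum_positionsAux cs 0 _ fun j c p h => by simpa using localCpx_cons n h p,
      localCpx, if_pos rfl, zero_add]
    rfl

theorem sum_positionsAux : ∀ (cs : List (ℕ × LDT)) (i : ℕ) (g : List ℕ → ℕ),
    (∀ j c p, cs[j]? = some c →
      g ((i + j) :: p) = (if p = [] then _root_.cpx c.1 else 0) + c.2.localCpx p) →
    ((positionsAux i cs).map g).sum = formulaCpxList cs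
  | [], _, _, _ => by simp [positionsAux, formulaCpxList]
  | c :: cs, i, g, hg => by
    have hhead : ∀ p ∈ c.2.positions,
        (g ∘ (i :: ·)) p = (if p = [] then _root_.cpx c.1 else 0) + c.2.localCpx p :=
      fun p _ => by simpa using hg 0 c p rfl
    have htail := sum_positionsAux cs (i + 1) g fun j c' p h => by
      rw [Nat.add_right_comm]
      exact hg (j + 1) c' p h
    rw [positionsAux_cons, List.map_append, List.sum_append, List.map_map,
      List.map_congr_left hhead, sum_positions_add_ite_nil, sum_localCpx_positions, htail,
      formulaCpxList]
end

theorem formulaCpx_eq_sum (t : LDT) :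
    t.formulaCpx = (∑ q ∈ t.edgeFinset, _root_.cpx (t.edgeLabelAt q))
      + (∑ p ∈ t.vertFinset.filter (fun p => (t.childrenAt p).length = 0),
          _root_.cpx (t.labelAt p))
      + ∑ p ∈ t.vertFinset.filter
            (fun p => (t.childrenAt p).length ≠ 0 ∧ 1 < t.labelAt p),
          _root_.cpx (t.labelAt p) := by
  have hedge : t.edgeFinset = t.vertFinset.filter (· ≠ []) := by
    rw [edgeFinset, vertFinset, Finset.filter_ne']
  rw [hedge, Finset.sum_filter, Finset.sum_filter, Finset.sum_filter,
    ← Finset.sum_add_distrib, ← Finset.sum_add_distrib, ← sum_localCpx_positions,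
    ← List.sum_toFinset _ (nodup_positions t)]
  refine Finset.sum_congr rfl fun p _ => ?_
  simp only [localCpx, vertexCpx, List.length_eq_zero_iff, ne_eq]
  split_ifs <;> simp_all <;> omega

/-! ### Invariance under isomorphism -/

theorem Iso.formulaCpx_eq {t₁ t₂ : LDT} (h : t₁.Iso t₂) : t₁.formulaCpx = t₂.formulaCpx := by
  induction h with
  | node n cs₁ cs₂ σ hlab _ ih =>
    have hlen : cs₁.length = cs₂.length := by simpa using Fintype.card_congr σ
    have hnil : cs₁ = [] ↔ cs₂ = [] := by
      rw [← List.length_eq_zero_iff, hlen, List.length_eq_zero_iff]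
    simp only [formulaCpx_eq_vertexCpx_add, label, children, vertexCpx, hnil]
    rw [formulaCpxList_eq_sum, formulaCpxList_eq_sum, ← Fin.sum_univ_fun_getElem,
      ← Fin.sum_univ_fun_getElem, ← Equiv.sum_comp σ]
    congr 1
    refine Finset.sum_congr rfl fun i _ => ?_
    simp only [List.get_eq_getElem] at hlab ih
    rw [hlab i, ih i]

/-! ### Lower bound -/

theorem vertexCpx_le_of_imp (n : ℕ) {cs cs' : List (ℕ × LDT)} (h : cs = [] → cs' = []) :
    vertexCpx n cs ≤ vertexCpx n cs' := by
  unfold vertexCpx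
  split_ifs <;> first | exact le_rfl | exact Nat.zero_le _ | tauto

theorem vertexCpx_mul_le {a b : ℕ} (ha : 0 < a) (hb : 0 < b) (cs₁ cs₂ : List (ℕ × LDT)) :
    vertexCpx (a * b) (cs₁ ++ cs₂) ≤ vertexCpx a cs₁ + vertexCpx b cs₂ := by
  rcases (by omega : a = 1 ∨ 1 < a) with rfl | ha₁
  · rw [one_mul]
    exact (vertexCpx_le_of_imp b fun h => (List.append_eq_nil_iff.1 h).2).trans
      (Nat.le_add_left _ _)
  rcases (by omega : b = 1 ∨ 1 < b) with rfl | hb₁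
  · rw [mul_one]
    exact (vertexCpx_le_of_imp a fun h => (List.append_eq_nil_iff.1 h).1).trans
      (Nat.le_add_right _ _)
  calc vertexCpx (a * b) (cs₁ ++ cs₂) ≤ _root_.cpx (a * b) := by
        unfold vertexCpx; split_ifs <;> simp
    _ ≤ _root_.cpx a + _root_.cpx b := cpx_mul_le ha hb
    _ = vertexCpx a cs₁ + vertexCpx b cs₂ := by simp [vertexCpx, ha₁, hb₁]

end LDT

theorem LDE.label_tree_pos : ∀ {E : LDE}, E.WF → 0 < E.tree.label
  | .const _, h => h
  | .mul _ _, h => Nat.mul_pos (label_tree_pos h.1) (label_tree_pos h.2.1)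
  | .step _ _ _, _ => one_pos

theorem LDE.formulaCpx_tree_le : ∀ {E : LDE}, E.WF → E.tree.formulaCpx ≤ E.cpx
  | .const n, _ => by
    simp [tree, LDT.formulaCpx_eq_vertexCpx_add, LDT.vertexCpx, LDT.formulaCpxList, cpx,
      LDT.label, LDT.children]
  | .step E _ c, h => by
    have hroot : LDT.vertexCpx 1 [(c, E.tree)] = 0 := by simp [LDT.vertexCpx]
    rw [tree, LDT.formulaCpx_eq_vertexCpx_add, LDT.label, LDT.children, hroot,
      LDT.formulaCpxList, LDT.formulaCpxList, cpx]
    have ih := formulaCpx_tree_le h.1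
    dsimp only
    omega
  | .mul E₁ E₂, h => by
    have ih₁ := formulaCpx_tree_le h.1
    have ih₂ := formulaCpx_tree_le h.2.1
    have hmul := LDT.vertexCpx_mul_le (label_tree_pos h.1) (label_tree_pos h.2.1)
      E₁.tree.children E₂.tree.children
    rw [LDT.formulaCpx_eq_vertexCpx_add] at ih₁ ih₂
    rw [tree, cpx, LDT.formulaCpx_eq_vertexCpx_add, LDT.label, LDT.children,
      LDT.formulaCpxList_append]
    omega

/-! ### Realising the formula -/

namespace LDT

mutual
def numEdges : LDT → ℕ
  | .node _ cs => numEdgesList cs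

def numEdgesList : List (ℕ × LDT) → ℕ
  | [] => 0
  | c :: cs => c.2.numEdges + 1 + numEdgesList cs
end

mutual
/-- `toLDE t k` uses the variables `k, …, k + numEdges t - 1`, one per edge, and omits a root
label `1` so as not to pay `‖1‖` for it. -/
def toLDE : LDT → ℕ → LDE
  | .node n [], _ => .const n
  | .node n (c :: cs), k =>
      if n = 1 then toLDEList (c :: cs) k
      else .mul (.const n) (toLDEList (c :: cs) k)

def toLDEList : List (ℕ × LDT) → ℕ → LDE
  | [], _ => .const 1
  | [c], k => .step (toLDE c.2 k) (k + c.2.numEdges) c.1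
  | c :: c' :: cs, k =>
      .mul (.step (toLDE c.2 k) (k + c.2.numEdges) c.1)
        (toLDEList (c' :: cs) (k + c.2.numEdges + 1))
end

mutual
theorem vars_toLDE_subset : ∀ (t : LDT) (k : ℕ),
    (toLDE t k).vars ⊆ Finset.Ico k (k + t.numEdges)
  | .node n [], k => by simp [toLDE, LDE.vars]
  | .node n (c :: cs), k => by
    have hL := vars_toLDEList_subset (c :: cs) k
    rw [numEdges]
    unfold toLDE
    split_ifs
    · exact hL
    · simpa [LDE.vars] using hL

theorem vars_toLDEList_subset : ∀ (cs : List (ℕ × LDT)) (k : ℕ),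
    (toLDEList cs k).vars ⊆ Finset.Ico k (k + numEdgesList cs)
  | [], k => by simp [toLDEList, LDE.vars]
  | [c], k => by
    have h := vars_toLDE_subset c.2 k
    intro x hx
    simp only [toLDEList, LDE.vars, Finset.mem_insert] at hx
    simp only [numEdgesList, Finset.mem_Ico]
    rcases hx with rfl | hx
    · omega
    · have := Finset.mem_Ico.1 (h hx)
      omega
  | c :: c' :: cs, k => by
    have h₁ := vars_toLDE_subset c.2 k
    have h₂ := vars_toLDEList_subset (c' :: cs) (k + c.2.numEdges + 1)
    intro x hx
    simp only [toLDEList, LDE.vars, Finset.mem_union, Finset.mem_insert] at hx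
    rw [numEdgesList, Finset.mem_Ico]
    rcases hx with (rfl | hx) | hx
    · omega
    · have := Finset.mem_Ico.1 (h₁ hx)
      omega
    · have := Finset.mem_Ico.1 (h₂ hx)
      omega
end

theorem notMem_vars_toLDE (t : LDT) (k : ℕ) : k + t.numEdges ∉ (toLDE t k).vars :=
  fun h => by simpa using vars_toLDE_subset t k h

mutual
theorem wf_toLDE : ∀ {t : LDT}, t.Pos → ∀ k, (toLDE t k).WF
  | .node n [], h, _ => h.1
  | .node n (c :: cs), h, k => by
    have hL := wf_toLDEList (cs := c :: cs) h.2 k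
    unfold toLDE
    split_ifs
    · exact hL
    · exact ⟨h.1, hL, Finset.disjoint_empty_left _⟩

theorem wf_toLDEList : ∀ {cs : List (ℕ × LDT)}, PosAux cs → ∀ k, (toLDEList cs k).WF
  | [], _, _ => one_pos
  | [c], h, k => ⟨wf_toLDE h.2.1 k, notMem_vars_toLDE c.2 k, h.1⟩
  | c :: c' :: cs, h, k => by
    refine ⟨⟨wf_toLDE h.2.1 k, notMem_vars_toLDE c.2 k, h.1⟩, wf_toLDEList h.2.2 _, ?_⟩
    refine Finset.disjoint_left.2 fun x hx hx' => ?_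
    have h₁ := vars_toLDE_subset c.2 k
    have h₂ := Finset.mem_Ico.1 (vars_toLDEList_subset (c' :: cs) _ hx')
    rcases Finset.mem_insert.1 hx with rfl | hx
    · omega
    · have := Finset.mem_Ico.1 (h₁ hx)
      omega
end

mutual
theorem tree_toLDE : ∀ (t : LDT) (k : ℕ), (toLDE t k).tree = t
  | .node n [], _ => rfl
  | .node n (c :: cs), k => by
    have hL := tree_toLDEList (c :: cs) k (List.cons_ne_nil c cs)
    unfold toLDE
    split_ifs with hn
    · rw [hL, hn]
    · rw [LDE.tree, hL, LDE.tree, label, label, children, children, mul_one, List.nil_append]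

theorem tree_toLDEList : ∀ (cs : List (ℕ × LDT)) (k : ℕ), cs ≠ [] →
    (toLDEList cs k).tree = node 1 cs
  | [], _, h => absurd rfl h
  | [c], k, _ => by rw [toLDEList, LDE.tree, tree_toLDE]
  | c :: c' :: cs, k, _ => by
    rw [toLDEList, LDE.tree, LDE.tree, tree_toLDE,
      tree_toLDEList (c' :: cs) _ (List.cons_ne_nil c' cs)]
    rfl
end

mutual
theorem cpx_toLDE : ∀ {t : LDT}, t.Pos → ∀ k, (toLDE t k).cpx = t.formulaCpx
  | .node n [], _, _ => by
    simp [toLDE, LDE.cpx, formulaCpx_eq_vertexCpx_add, vertexCpx, label, children,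
      formulaCpxList]
  | .node n (c :: cs), h, k => by
    have hL := cpx_toLDEList (cs := c :: cs) h.2 (List.cons_ne_nil c cs) k
    rw [formulaCpx_eq_vertexCpx_add, label, children]
    unfold toLDE
    split_ifs with hn
    · rw [hL, hn]
      simp [vertexCpx]
    · have h1n : 1 < n := by have := h.1; omega
      rw [LDE.cpx, LDE.cpx, hL]
      simp [vertexCpx, h1n]

theorem cpx_toLDEList : ∀ {cs : List (ℕ × LDT)}, PosAux cs → cs ≠ [] → ∀ k,
    (toLDEList cs k).cpx = formulaCpxList cs
  | [], _, h, _ => absurd rfl h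
  | [c], h, _, k => by
    rw [toLDEList, LDE.cpx, cpx_toLDE h.2.1, formulaCpxList, formulaCpxList]
    omega
  | c :: c' :: cs, h, _, k => by
    rw [toLDEList, LDE.cpx, LDE.cpx, cpx_toLDE h.2.1,
      cpx_toLDEList h.2.2 (List.cons_ne_nil c' cs)]
    simp only [formulaCpxList]
    omega
end

mutual
theorem Iso.refl : ∀ t : LDT, t.Iso t
  | .node n cs => .node n cs cs (Equiv.refl _) (fun _ => rfl) (Iso.refl_get cs)

theorem Iso.refl_get : ∀ (cs : List (ℕ × LDT)) (i : Fin cs.length),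
    (cs.get i).2.Iso (cs.get (Equiv.refl _ i)).2
  | c :: _, ⟨0, _⟩ => Iso.refl c.2
  | _ :: cs, ⟨j + 1, hj⟩ => Iso.refl_get cs ⟨j, Nat.lt_of_succ_lt_succ hj⟩
end

end LDT

/-- `‖T‖` equals the sum of the complexities of the edge
labels, of the labels of leaves, and of the labels `> 1` of non-leaf vertices. -/
theorem tree_cpx_formula (t : LDT) (ht : t.Pos) :
    t.cpx = (∑ q ∈ t.edgeFinset, cpx (t.edgeLabelAt q))
      + (∑ p ∈ t.vertFinset.filter (fun p => (t.childrenAt p).length = 0),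
          cpx (t.labelAt p))
      + ∑ p ∈ t.vertFinset.filter
            (fun p => (t.childrenAt p).length ≠ 0 ∧ 1 < t.labelAt p),
          cpx (t.labelAt p) := by
  rw [← LDT.formulaCpx_eq_sum]
  refine IsLeast.csInf_eq ⟨⟨t.toLDE 0, LDT.wf_toLDE ht 0, ?_, LDT.cpx_toLDE ht 0⟩, ?_⟩
  · rw [LDT.tree_toLDE]
    exact LDT.Iso.refl t
  · rintro _ ⟨E, hE, hiso, rfl⟩
    exact hiso.formulaCpx_eq ▸ E.formulaCpx_tree_le hE
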